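/- arXiv:2212.03340 — 3 statements merged into one kernel-verified Lean document; each statement's English description precedes it below -/
import Mathlib

section
/- Fix reference prices P_X, P_Y > 0, p₀ = P_X/P_Y, and budget B > 0. Let ψ(p_X, p_Y) = p_X·p_Y/(p_X + p_Y)² for (p_X, p_Y) ∈ (0, P_X] × (0, P_Y] and 0 otherwise. Then there exists c > 0 such that, with L(p) = c·p/(1 + p) for p > 0 (the liquidity allocation implied by the LMSR trading function f(x, y) = 2 − e^{−x} − e^{−y}), Y₀ = ∫₀^{p₀} L(p)/p dp = c·ln(1 + p₀), X₀ = ∫_{p₀}^∞ L(p)/p² dp = c·ln((1 + p₀)/p₀), and P_X·X₀ + P_Y·Y₀ = B, the triple (L, X₀, Y₀) is optimal for ψ. -/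
open MeasureTheory Set
open scoped ENNReal

noncomputable section

/-- The open positive orthant of `ℝ²`, on which prices live. -/
def orth : Set (ℝ × ℝ) := Set.Ioi 0 ×ˢ Set.Ioi 0

/-- The expected CFMM inefficiency `I_ψ(L) = ∬ ψ(p_X,p_Y) / (p_Y·L(p_X/p_Y)) dp_X dp_Y`,
a Lebesgue integral valued in `[0,∞]`; `ENNReal` division encodes the conventions
`c/0 = ∞` for `c > 0` and `0/0 = 0`. -/
def Ineff (ψ : ℝ × ℝ → ℝ) (L : ℝ → ℝ) : ℝ≥0∞ :=
  ∫⁻ q in orth, ENNReal.ofReal (ψ q) / ENNReal.ofReal (q.2 * L (q.1 / q.2))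

/-- Feasibility of a triple `(L, X₀, Y₀)` of a liquidity allocation and initial reserves,
for reference prices `P_X, P_Y` (so `p₀ = P_X / P_Y`) and budget `B`. -/
def Feasible (PX PY B : ℝ) (L : ℝ → ℝ) (X0 Y0 : ℝ) : Prop :=
  Measurable L ∧ (∀ p ∈ Set.Ioi (0:ℝ), 0 ≤ L p) ∧ 0 ≤ X0 ∧ 0 ≤ Y0 ∧
  (∫⁻ p in Set.Ioc (0:ℝ) (PX / PY), ENNReal.ofReal (L p / p)) ≤ ENNReal.ofReal Y0 ∧
  (∫⁻ p in Set.Ioi (PX / PY), ENNReal.ofReal (L p / p ^ 2)) ≤ ENNReal.ofReal X0 ∧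
  PX * X0 + PY * Y0 ≤ B

/-- A feasible triple is optimal for the belief `ψ` if it minimizes the expected CFMM
inefficiency over all feasible triples. -/
def IsOptimal (PX PY B : ℝ) (ψ : ℝ × ℝ → ℝ) (L : ℝ → ℝ) (X0 Y0 : ℝ) : Prop :=
  Feasible PX PY B L X0 Y0 ∧
  ∀ L' X0' Y0', Feasible PX PY B L' X0' Y0' → Ineff ψ L ≤ Ineff ψ L'

/-!
Substituting `p_X = y p` and integrating out `y` turns the inefficiency into `∫ s ℓ / L`, while
the budget constraint becomes `∫ (s / ℓ) L ≤ B`, where `ℓ p = p / (1 + p)` and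
`s p = min P_Y (P_X / p) / (1 + p)` (`priceDensity`). Pointwise AM–GM,
`2 s / c ≤ s ℓ / L + s L / (ℓ c²)`, integrates to `I_ψ(L) ≥ M² / B` with `M = ∫ s`
(`priceMass`), and the bound is attained by `L = c ℓ` for `c = B / M`.
-/

open Real

theorem log_one_add_div_self_nonneg {t : ℝ} (ht : 0 < t) : 0 ≤ log ((1 + t) / t) :=
  log_nonneg (by rw [le_div_iff₀ ht]; linarith)

theorem lintegral_Ioc_inv_one_add {t : ℝ} (ht : 0 < t) :
    ∫⁻ p in Ioc 0 t, ENNReal.ofReal (1 + p)⁻¹ = ENNReal.ofReal (log (1 + t)) := by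
  have hint : IntegrableOn (fun p : ℝ => (1 + p)⁻¹) (Ioc 0 t) :=
    (ContinuousOn.integrableOn_Icc (continuousOn_const.add continuousOn_id |>.inv₀
      fun x hx => by simp only [Pi.add_apply, id]; linarith [hx.1])).mono_set Ioc_subset_Icc_self
  rw [← ofReal_integral_eq_lintegral_ofReal hint
    ((ae_restrict_mem measurableSet_Ioc).mono fun p hp => by have := hp.1; positivity),
    ← intervalIntegral.integral_of_le ht.le, intervalIntegral.integral_comp_add_left (·⁻¹),
    integral_inv_of_pos (by norm_num) (by linarith), add_zero, div_one]

theorem lintegral_Ioi_inv_mul_one_add {t : ℝ} (ht : 0 < t) :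
    ∫⁻ p in Ioi t, ENNReal.ofReal (p * (1 + p))⁻¹ = ENNReal.ofReal (log ((1 + t) / t)) := by
  have hderiv : ∀ x ∈ Ioi t, HasDerivAt (fun p => log p - log (1 + p)) (x * (1 + x))⁻¹ x := by
    intro x (hx : t < x)
    have hx0 : 0 < x := ht.trans hx
    refine ((hasDerivAt_log hx0.ne').sub
      (((hasDerivAt_id x).const_add 1).log (by positivity))).congr_deriv ?_
    rw [id, div_eq_inv_mul, mul_one, inv_sub_inv hx0.ne' (by positivity)]
    simp
  have hcont : ContinuousWithinAt (fun p => log p - log (1 + p)) (Ici t) t :=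
    ((continuousAt_log ht.ne').sub
      ((continuousAt_log (by positivity)).comp (by fun_prop))).continuousWithinAt
  have hlim : Filter.Tendsto (fun p => log p - log (1 + p)) Filter.atTop (nhds 0) := by
    have hinv : Filter.Tendsto (fun p : ℝ => -log (1 + p⁻¹)) Filter.atTop (nhds 0) := by
      have h : Filter.Tendsto (fun p : ℝ => 1 + p⁻¹) Filter.atTop (nhds 1) := by
        simpa using tendsto_inv_atTop_zero.const_add (1 : ℝ)
      simpa using ((continuousAt_log one_ne_zero).tendsto.comp h).neg
    refine hinv.congr' ((Filter.eventually_gt_atTop 0).mono fun p hp => ?_)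
    rw [show 1 + p⁻¹ = (1 + p) / p by field_simp; ring, log_div (by positivity) hp.ne']
    ring
  have hpos : ∀ x ∈ Ioi t, 0 ≤ (x * (1 + x))⁻¹ := fun x (hx : t < x) => by
    have := ht.trans hx; positivity
  rw [← ofReal_integral_eq_lintegral_ofReal
      (integrableOn_Ioi_deriv_of_nonneg hcont hderiv hpos hlim)
      ((ae_restrict_mem measurableSet_Ioi).mono hpos),
    integral_Ioi_of_hasDerivAt_of_nonneg hcont hderiv hpos hlim, log_div (by positivity) ht.ne']
  ring_nf

theorem lintegral_Ioc_lmsr_div {c t : ℝ} (hc : 0 ≤ c) (ht : 0 < t) :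
    ∫⁻ p in Ioc 0 t, ENNReal.ofReal (c * (p / (1 + p)) / p) =
      ENNReal.ofReal (c * log (1 + t)) := by
  rw [setLIntegral_congr_fun measurableSet_Ioc fun p (hp : p ∈ Ioc 0 t) => by
      rw [show c * (p / (1 + p)) / p = c * (1 + p)⁻¹ by field_simp [hp.1.ne'],
        ENNReal.ofReal_mul hc],
    lintegral_const_mul' _ _ ENNReal.ofReal_ne_top, lintegral_Ioc_inv_one_add ht,
    ← ENNReal.ofReal_mul hc]

theorem lintegral_Ioi_lmsr_div_sq {c t : ℝ} (hc : 0 ≤ c) (ht : 0 < t) :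
    ∫⁻ p in Ioi t, ENNReal.ofReal (c * (p / (1 + p)) / p ^ 2) =
      ENNReal.ofReal (c * log ((1 + t) / t)) := by
  rw [setLIntegral_congr_fun measurableSet_Ioi fun p (hp : t < p) => by
      rw [show c * (p / (1 + p)) / p ^ 2 = c * (p * (1 + p))⁻¹ by
          field_simp [(ht.trans hp).ne'],
        ENNReal.ofReal_mul hc],
    lintegral_const_mul' _ _ ENNReal.ofReal_ne_top, lintegral_Ioi_inv_mul_one_add ht,
    ← ENNReal.ofReal_mul hc]

theorem ineff_eq_lintegral_Ioi {ψ : ℝ × ℝ → ℝ} {L : ℝ → ℝ} (hψ : Measurable ψ)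
    (hL : Measurable L) :
    Ineff ψ L = ∫⁻ p in Ioi 0,
      (∫⁻ y in Ioi 0, ENNReal.ofReal (ψ (y * p, y))) / ENNReal.ofReal (L p) := by
  set F : ℝ × ℝ → ℝ≥0∞ := fun q => ENNReal.ofReal (ψ q) / ENNReal.ofReal (q.2 * L (q.1 / q.2))
  have hF : Measurable F := by unfold F; fun_prop
  have hG : Measurable fun q : ℝ × ℝ =>
      ENNReal.ofReal (ψ (q.1 * q.2, q.1)) / ENNReal.ofReal (L q.2) := by
    fun_prop
  have hinner : ∀ y ∈ Ioi (0 : ℝ), ∫⁻ x in Ioi 0, F (x, y) =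
      ∫⁻ p in Ioi 0, ENNReal.ofReal (ψ (y * p, y)) / ENNReal.ofReal (L p) := by
    intro y (hy : (0 : ℝ) < y)
    have hsubst := lintegral_image_eq_lintegral_abs_deriv_mul (measurableSet_Ioi (a := (0 : ℝ)))
      (fun p _ => (hasDerivAt_const_mul y).hasDerivWithinAt)
      (mul_right_injective₀ hy.ne').injOn fun x => F (x, y)
    rw [image_const_mul_Ioi_zero hy] at hsubst
    rw [hsubst]
    refine setLIntegral_congr_fun (measurableSet_Ioi (a := (0 : ℝ))) fun p _ => ?_
    simp only [F, mul_div_cancel_left₀ p hy.ne', abs_of_pos hy, ENNReal.ofReal_mul hy.le]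
    rw [← mul_div_assoc,
      ENNReal.mul_div_mul_left _ _ (ENNReal.ofReal_pos.2 hy).ne' ENNReal.ofReal_ne_top]
  calc Ineff ψ L = ∫⁻ y in Ioi 0, ∫⁻ x in Ioi 0, F (x, y) := by
        rw [Ineff, orth, Measure.volume_eq_prod, ← Measure.prod_restrict,
          lintegral_prod_symm _ hF.aemeasurable]
    _ = ∫⁻ y in Ioi 0, ∫⁻ p in Ioi 0, ENNReal.ofReal (ψ (y * p, y)) / ENNReal.ofReal (L p) :=
        setLIntegral_congr_fun measurableSet_Ioi hinner
    _ = _ := by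
        rw [lintegral_lintegral_swap hG.aemeasurable]
        simp_rw [div_eq_mul_inv]
        congr 1 with p
        exact lintegral_mul_const _ (by fun_prop)

theorem ofReal_two_mul_div_le {s ℓ L c : ℝ} (hs : 0 ≤ s) (hℓ : 0 < ℓ) (hL : 0 ≤ L) (hc : 0 < c) :
    ENNReal.ofReal (2 * s / c) ≤
      ENNReal.ofReal (s * ℓ) / ENNReal.ofReal L + ENNReal.ofReal (s / ℓ * L / c ^ 2) := by
  rcases hL.eq_or_lt with rfl | hL
  · rcases hs.eq_or_lt with rfl | hs
    · simp
    · rw [ENNReal.ofReal_zero, ENNReal.div_zero (by positivity)]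
      exact le_top.trans le_self_add
  · rw [← ENNReal.ofReal_div_of_pos hL, ← ENNReal.ofReal_add (by positivity) (by positivity)]
    refine ENNReal.ofReal_le_ofReal ?_
    have key : s * ℓ / L + s / ℓ * L / c ^ 2 - 2 * s / c =
        s * (ℓ * c - L) ^ 2 / (L * ℓ * c ^ 2) := by
      field_simp
      ring
    have : 0 ≤ s * (ℓ * c - L) ^ 2 / (L * ℓ * c ^ 2) := by positivity
    linarith

theorem ofReal_sq_div_le_lintegral_div {α : Type*} [MeasurableSpace α] {μ : Measure α}
    {s ℓ L : α → ℝ} {M B : ℝ} (hs : ∀ᵐ x ∂μ, 0 ≤ s x) (hℓ : ∀ᵐ x ∂μ, 0 < ℓ x)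
    (hL : ∀ᵐ x ∂μ, 0 ≤ L x) (hmeas : AEMeasurable (fun x => s x / ℓ x * L x) μ)
    (hM : 0 < M) (hB : 0 < B) (hsM : ∫⁻ x, ENNReal.ofReal (s x) ∂μ = ENNReal.ofReal M)
    (hbudget : ∫⁻ x, ENNReal.ofReal (s x / ℓ x * L x) ∂μ ≤ ENNReal.ofReal B) :
    ENNReal.ofReal (M ^ 2 / B) ≤ ∫⁻ x, ENNReal.ofReal (s x * ℓ x) / ENNReal.ofReal (L x) ∂μ := by
  set c := B / M
  have hc : 0 < c := div_pos hB hM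
  have htangent : ENNReal.ofReal (2 * M / c) ≤
      (∫⁻ x, ENNReal.ofReal (s x * ℓ x) / ENNReal.ofReal (L x) ∂μ) + ENNReal.ofReal (M ^ 2 / B) :=
    calc ENNReal.ofReal (2 * M / c) = ∫⁻ x, ENNReal.ofReal (2 / c) * ENNReal.ofReal (s x) ∂μ := by
          rw [lintegral_const_mul' _ _ ENNReal.ofReal_ne_top, hsM,
            ← ENNReal.ofReal_mul (by positivity)]
          congr 1
          ring
      _ ≤ ∫⁻ x, (ENNReal.ofReal (s x * ℓ x) / ENNReal.ofReal (L x) +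
            ENNReal.ofReal (c ^ 2)⁻¹ * ENNReal.ofReal (s x / ℓ x * L x)) ∂μ := by
          refine lintegral_mono_ae ?_
          filter_upwards [hs, hℓ, hL] with x hsx hℓx hLx
          rw [← ENNReal.ofReal_mul (by positivity), ← ENNReal.ofReal_mul (by positivity)]
          convert ofReal_two_mul_div_le hsx hℓx hLx hc using 3 <;> ring
      _ = (∫⁻ x, ENNReal.ofReal (s x * ℓ x) / ENNReal.ofReal (L x) ∂μ) +
            ENNReal.ofReal (c ^ 2)⁻¹ * ∫⁻ x, ENNReal.ofReal (s x / ℓ x * L x) ∂μ := by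
          rw [lintegral_add_right' _ (by fun_prop), lintegral_const_mul' _ _ ENNReal.ofReal_ne_top]
      _ ≤ _ := by
          gcongr
          calc ENNReal.ofReal (c ^ 2)⁻¹ * ∫⁻ x, ENNReal.ofReal (s x / ℓ x * L x) ∂μ
              ≤ ENNReal.ofReal (c ^ 2)⁻¹ * ENNReal.ofReal B := by gcongr
            _ = ENNReal.ofReal (M ^ 2 / B) := by
              rw [← ENNReal.ofReal_mul (by positivity)]
              congr 1
              simp only [c]
              field_simp
  have hsplit : ENNReal.ofReal (2 * M / c) =
      ENNReal.ofReal (M ^ 2 / B) + ENNReal.ofReal (M ^ 2 / B) := by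
    rw [← ENNReal.ofReal_add (by positivity) (by positivity)]
    congr 1
    simp only [c]
    field_simp
    ring
  rw [hsplit] at htangent
  exact (ENNReal.add_le_add_iff_right ENNReal.ofReal_ne_top).1 htangent

theorem lintegral_mul_div_const_mul {α : Type*} [MeasurableSpace α] {μ : Measure α}
    {s ℓ : α → ℝ} {M B : ℝ} (hℓ : ∀ᵐ x ∂μ, 0 < ℓ x) (hM : 0 < M) (hB : 0 < B)
    (hsM : ∫⁻ x, ENNReal.ofReal (s x) ∂μ = ENNReal.ofReal M) :
    ∫⁻ x, ENNReal.ofReal (s x * ℓ x) / ENNReal.ofReal (B / M * ℓ x) ∂μ =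
      ENNReal.ofReal (M ^ 2 / B) := by
  have hc : 0 < B / M := div_pos hB hM
  calc _ = ∫⁻ x, ENNReal.ofReal (B / M)⁻¹ * ENNReal.ofReal (s x) ∂μ := by
        refine lintegral_congr_ae (hℓ.mono fun x hx => ?_)
        dsimp only
        rw [← ENNReal.ofReal_div_of_pos (by positivity), ← ENNReal.ofReal_mul (by positivity)]
        congr 1
        field_simp
    _ = _ := by
        rw [lintegral_const_mul' _ _ ENNReal.ofReal_ne_top, hsM,
          ← ENNReal.ofReal_mul (by positivity)]
        congr 1
        field_simp

def boxBelief (PX PY : ℝ) (q : ℝ × ℝ) : ℝ :=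
  if q.1 ∈ Ioc 0 PX ∧ q.2 ∈ Ioc 0 PY then q.1 * q.2 / (q.1 + q.2) ^ 2 else 0

def priceDensity (PX PY p : ℝ) : ℝ := min PY (PX / p) / (1 + p)

def priceMass (PX PY : ℝ) : ℝ :=
  PY * log (1 + PX / PY) + PX * log ((1 + PX / PY) / (PX / PY))

section
variable {PX PY p : ℝ}

theorem priceMass_pos (hPX : 0 < PX) (hPY : 0 < PY) : 0 < priceMass PX PY := by
  have ht : 0 < PX / PY := div_pos hPX hPY
  exact add_pos_of_pos_of_nonneg (mul_pos hPY (log_pos (by linarith)))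
    (mul_nonneg hPX.le (log_one_add_div_self_nonneg ht))

theorem priceDensity_of_le (hPY : 0 < PY) (hp : 0 < p) (hpt : p ≤ PX / PY) :
    priceDensity PX PY p = PY / (1 + p) := by
  rw [priceDensity, min_eq_left ((le_div_iff₀ hp).2 (by rwa [mul_comm, ← le_div_iff₀ hPY]))]

theorem priceDensity_of_lt (hPY : 0 < PY) (hp : 0 < p) (hpt : PX / PY < p) :
    priceDensity PX PY p = PX / (p * (1 + p)) := by
  rw [priceDensity, min_eq_right ((div_le_iff₀ hp).2 (by rw [div_lt_iff₀ hPY] at hpt; linarith)),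
    div_div]

theorem priceDensity_nonneg (hPX : 0 ≤ PX) (hPY : 0 ≤ PY) (hp : 0 ≤ p) :
    0 ≤ priceDensity PX PY p := by
  unfold priceDensity; positivity

@[fun_prop]
theorem measurable_priceDensity : Measurable (priceDensity PX PY) := by
  unfold priceDensity; fun_prop

@[fun_prop]
theorem measurable_boxBelief : Measurable (boxBelief PX PY) :=
  Measurable.ite ((measurableSet_Ioc.preimage measurable_fst).inter
    (measurableSet_Ioc.preimage measurable_snd)) (by fun_prop) measurable_const

theorem lintegral_boxBelief (hp : 0 < p) :
    ∫⁻ y in Ioi 0, ENNReal.ofReal (boxBelief PX PY (y * p, y)) =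
      ENNReal.ofReal (priceDensity PX PY p * (p / (1 + p))) := by
  have hind : ∀ y ∈ Ioi (0 : ℝ), ENNReal.ofReal (boxBelief PX PY (y * p, y)) =
      (Ioc 0 (min PY (PX / p))).indicator (fun _ => ENNReal.ofReal (p / (1 + p) ^ 2)) y := by
    intro y (hy : 0 < y)
    have hmem : (y * p ∈ Ioc 0 PX ∧ y ∈ Ioc 0 PY) ↔ y ∈ Ioc 0 (min PY (PX / p)) := by
      simp only [mem_Ioc, le_min_iff, le_div_iff₀ hp]
      constructor
      · rintro ⟨⟨-, hx⟩, -, hy'⟩; exact ⟨hy, hy', hx⟩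
      · rintro ⟨-, hy', hx⟩; exact ⟨⟨by positivity, hx⟩, hy, hy'⟩
    by_cases h : y ∈ Ioc 0 (min PY (PX / p))
    · rw [indicator_of_mem h, boxBelief, if_pos (hmem.2 h)]
      congr 1
      field_simp
      ring
    · rw [indicator_of_notMem h, boxBelief, if_neg (mt hmem.1 h), ENNReal.ofReal_zero]
  rw [setLIntegral_congr_fun measurableSet_Ioi hind, lintegral_indicator_const measurableSet_Ioc,
    Measure.restrict_apply measurableSet_Ioc, inter_eq_left.2 Ioc_subset_Ioi_self, Real.volume_Ioc,
    sub_zero, ← ENNReal.ofReal_mul (by positivity), priceDensity]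
  congr 1
  field_simp

theorem ineff_boxBelief {L : ℝ → ℝ} (hL : Measurable L) :
    Ineff (boxBelief PX PY) L = ∫⁻ p in Ioi 0,
      ENNReal.ofReal (priceDensity PX PY p * (p / (1 + p))) / ENNReal.ofReal (L p) := by
  rw [ineff_eq_lintegral_Ioi (by fun_prop) hL]
  exact setLIntegral_congr_fun measurableSet_Ioi fun p hp => by rw [lintegral_boxBelief hp]

theorem lintegral_priceDensity (hPX : 0 < PX) (hPY : 0 < PY) :
    ∫⁻ p in Ioi 0, ENNReal.ofReal (priceDensity PX PY p) = ENNReal.ofReal (priceMass PX PY) := by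
  have ht : 0 < PX / PY := div_pos hPX hPY
  have hlow : ∀ p ∈ Ioc 0 (PX / PY), ENNReal.ofReal (priceDensity PX PY p) =
      ENNReal.ofReal PY * ENNReal.ofReal (1 + p)⁻¹ := fun p hp => by
    rw [priceDensity_of_le hPY hp.1 hp.2, div_eq_mul_inv, ENNReal.ofReal_mul hPY.le]
  have hhigh : ∀ p ∈ Ioi (PX / PY), ENNReal.ofReal (priceDensity PX PY p) =
      ENNReal.ofReal PX * ENNReal.ofReal (p * (1 + p))⁻¹ := fun p (hp : _ < p) => by
    rw [priceDensity_of_lt hPY (ht.trans hp) hp, div_eq_mul_inv, ENNReal.ofReal_mul hPX.le]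
  rw [← Ioc_union_Ioi_eq_Ioi ht.le, lintegral_union measurableSet_Ioi Ioc_disjoint_Ioi_same,
    setLIntegral_congr_fun measurableSet_Ioc hlow, setLIntegral_congr_fun measurableSet_Ioi hhigh,
    lintegral_const_mul' _ _ ENNReal.ofReal_ne_top, lintegral_const_mul' _ _ ENNReal.ofReal_ne_top,
    lintegral_Ioc_inv_one_add ht, lintegral_Ioi_inv_mul_one_add ht, ← ENNReal.ofReal_mul hPY.le,
    ← ENNReal.ofReal_mul hPX.le, priceMass, ENNReal.ofReal_add]
  · exact mul_nonneg hPY.le (log_pos (by linarith)).le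
  · exact mul_nonneg hPX.le (log_one_add_div_self_nonneg ht)

theorem Feasible.lintegral_priceDensity_mul_le {B X0 Y0 : ℝ} {L : ℝ → ℝ} (hPX : 0 < PX)
    (hPY : 0 < PY) (h : Feasible PX PY B L X0 Y0) :
    ∫⁻ p in Ioi 0, ENNReal.ofReal (priceDensity PX PY p / (p / (1 + p)) * L p) ≤
      ENNReal.ofReal B := by
  obtain ⟨-, -, hX0, hY0, hY, hX, hB⟩ := h
  have ht : 0 < PX / PY := div_pos hPX hPY
  have hlow : ∀ p ∈ Ioc 0 (PX / PY),
      ENNReal.ofReal (priceDensity PX PY p / (p / (1 + p)) * L p) =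
        ENNReal.ofReal PY * ENNReal.ofReal (L p / p) := fun p hp => by
    have := hp.1
    rw [priceDensity_of_le hPY hp.1 hp.2, ← ENNReal.ofReal_mul hPY.le]
    congr 1
    field_simp
  have hhigh : ∀ p ∈ Ioi (PX / PY),
      ENNReal.ofReal (priceDensity PX PY p / (p / (1 + p)) * L p) =
        ENNReal.ofReal PX * ENNReal.ofReal (L p / p ^ 2) := fun p (hp : _ < p) => by
    have := ht.trans hp
    rw [priceDensity_of_lt hPY this hp, ← ENNReal.ofReal_mul hPX.le]
    congr 1
    field_simp
  rw [← Ioc_union_Ioi_eq_Ioi ht.le, lintegral_union measurableSet_Ioi Ioc_disjoint_Ioi_same,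
    setLIntegral_congr_fun measurableSet_Ioc hlow, setLIntegral_congr_fun measurableSet_Ioi hhigh,
    lintegral_const_mul' _ _ ENNReal.ofReal_ne_top, lintegral_const_mul' _ _ ENNReal.ofReal_ne_top]
  calc _ ≤ ENNReal.ofReal PY * ENNReal.ofReal Y0 + ENNReal.ofReal PX * ENNReal.ofReal X0 := by
        gcongr
    _ = ENNReal.ofReal (PX * X0 + PY * Y0) := by
        rw [← ENNReal.ofReal_mul hPY.le, ← ENNReal.ofReal_mul hPX.le, add_comm,
          ENNReal.ofReal_add (by positivity) (by positivity)]
    _ ≤ ENNReal.ofReal B := ENNReal.ofReal_le_ofReal hB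

theorem ae_restrict_Ioi_div_one_add_pos : ∀ᵐ p ∂volume.restrict (Ioi (0 : ℝ)), 0 < p / (1 + p) :=
  (ae_restrict_mem measurableSet_Ioi).mono fun p (hp : 0 < p) => by positivity

theorem ineff_boxBelief_lmsr {B : ℝ} (hPX : 0 < PX) (hPY : 0 < PY) (hB : 0 < B) :
    Ineff (boxBelief PX PY) (fun p => B / priceMass PX PY * (p / (1 + p))) =
      ENNReal.ofReal (priceMass PX PY ^ 2 / B) := by
  rw [ineff_boxBelief (by fun_prop)]
  exact lintegral_mul_div_const_mul ae_restrict_Ioi_div_one_add_pos (priceMass_pos hPX hPY) hB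
    (lintegral_priceDensity hPX hPY)

theorem Feasible.ofReal_sq_div_le_ineff {B X0 Y0 : ℝ} {L : ℝ → ℝ} (hPX : 0 < PX) (hPY : 0 < PY)
    (hB : 0 < B) (h : Feasible PX PY B L X0 Y0) :
    ENNReal.ofReal (priceMass PX PY ^ 2 / B) ≤ Ineff (boxBelief PX PY) L := by
  have hL := h.1
  rw [ineff_boxBelief hL]
  exact ofReal_sq_div_le_lintegral_div
    ((ae_restrict_mem measurableSet_Ioi).mono fun p (hp : 0 < p) =>
      priceDensity_nonneg hPX.le hPY.le hp.le)
    ae_restrict_Ioi_div_one_add_pos ((ae_restrict_mem measurableSet_Ioi).mono h.2.1) (by fun_prop)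
    (priceMass_pos hPX hPY) hB (lintegral_priceDensity hPX hPY)
    (h.lintegral_priceDensity_mul_le hPX hPY)

end

theorem stmt_15 (PX PY B : ℝ) (hPX : 0 < PX) (hPY : 0 < PY) (hB : 0 < B)
    (ψ : ℝ × ℝ → ℝ)
    (hψ : ψ = fun q => if q.1 ∈ Set.Ioc (0:ℝ) PX ∧ q.2 ∈ Set.Ioc (0:ℝ) PY
        then q.1 * q.2 / (q.1 + q.2) ^ 2 else 0) :
    ∃ c > (0:ℝ), ∃ X0 Y0 : ℝ,
      Y0 = c * Real.log (1 + PX / PY) ∧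
      X0 = c * Real.log ((1 + PX / PY) / (PX / PY)) ∧
      (∫⁻ p in Set.Ioc (0:ℝ) (PX / PY),
          ENNReal.ofReal ((c * (p / (1 + p))) / p)) = ENNReal.ofReal Y0 ∧
      (∫⁻ p in Set.Ioi (PX / PY),
          ENNReal.ofReal ((c * (p / (1 + p))) / p ^ 2)) = ENNReal.ofReal X0 ∧
      PX * X0 + PY * Y0 = B ∧
      Feasible PX PY B (fun p => c * (p / (1 + p))) X0 Y0 ∧
      ∀ L' X0' Y0', Feasible PX PY B L' X0' Y0' →
        Ineff ψ (fun p => c * (p / (1 + p))) ≤ Ineff ψ L' := by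
  obtain rfl : ψ = boxBelief PX PY := hψ
  have ht : 0 < PX / PY := div_pos hPX hPY
  set c := B / priceMass PX PY
  have hc : 0 < c := div_pos hB (priceMass_pos hPX hPY)
  have hY := lintegral_Ioc_lmsr_div hc.le ht
  have hX := lintegral_Ioi_lmsr_div_sq hc.le ht
  have hspent : PX * (c * log ((1 + PX / PY) / (PX / PY))) + PY * (c * log (1 + PX / PY)) = B :=
    calc _ = c * priceMass PX PY := by rw [priceMass]; ring
      _ = B := div_mul_cancel₀ B (priceMass_pos hPX hPY).ne'
  have hfeas : Feasible PX PY B (fun p => c * (p / (1 + p))) _ _ :=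
    ⟨by fun_prop, fun p (hp : 0 < p) => by positivity,
      mul_nonneg hc.le (log_one_add_div_self_nonneg ht),
      mul_nonneg hc.le (log_pos (by linarith)).le, hY.le, hX.le, hspent.le⟩
  refine ⟨c, hc, _, _, rfl, rfl, hY, hX, hspent, hfeas, fun L' X0' Y0' hL' => ?_⟩
  rw [ineff_boxBelief_lmsr hPX hPY hB]
  exact hL'.ofReal_sq_div_le_ineff hPX hPY hB
end
end

section
/- Fix reference prices P_X, P_Y > 0, p₀ = P_X/P_Y, and budget B > 0. Let ψ, r : (0,∞)² → [0,∞) be measurable with ∬ r·ψ dp_X dp_Y < ∞, and fix constants δ > 0, s > 0, N > 0. For an allocation L define the expected fee revenue R(L) = (δ/N)·∬_{(0,∞)²} r(p_X, p_Y)·ψ(p_X, p_Y)·(1 − s/(p_Y·L(p_X/p_Y))) dp_X dp_Y, taking values in [−∞, ∞) with the conventions c/0 = ∞ for c > 0 and 0/0 = 0. Then a feasible triple (L, X₀, Y₀) maximizes R over all feasible triples if and only if it minimizes I_{r·ψ}(L) = ∬ r(p_X, p_Y)·ψ(p_X, p_Y)/(p_Y·L(p_X/p_Y)) dp_X dp_Y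 over all feasible triples; i.e., the revenue-maximizing allocation is exactly the allocation that is optimal (inefficiency-minimizing) for the belief function r·ψ. -/
open MeasureTheory Set
open scoped ENNReal

noncomputable section

/-- The expected fee revenue (per unit time) of a CFMM with allocation `L`, fee rate `δ`,
mean trade size `s` (in numeraire units), normalization `N`, trade-rate prediction `r`
and belief `ψ`:
`R(L) = (δ/N)·∬ r·ψ·(1 − s/(p_Y·L(p_X/p_Y)))`, valued in `[−∞, ∞)`, computed as
`(δ/N)·(∬ r·ψ − s·I_{r·ψ}(L))` with the conventions `c/0 = ∞` (`c > 0`), `0/0 = 0`. -/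
def Rev (r ψ : ℝ × ℝ → ℝ) (δ s N : ℝ) (L : ℝ → ℝ) : EReal :=
  ((ENNReal.ofReal (δ / N) : ℝ≥0∞) : EReal) *
    (((∫⁻ q in orth, ENNReal.ofReal (r q * ψ q) : ℝ≥0∞) : EReal) -
      ((ENNReal.ofReal s * Ineff (fun q => r q * ψ q) L : ℝ≥0∞) : EReal))

/-!
STATEMENT 16: A feasible triple maximizes the expected fee revenue `R` over all feasible
triples if and only if it minimizes the expected CFMM inefficiency `I_{r·ψ}` for the
belief `r·ψ` over all feasible triples.
-/

lemma aux_sub (A : ℝ) (x y : ℝ≥0∞) :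
    ((A : EReal) - (x : EReal) ≤ (A : EReal) - (y : EReal)) ↔ y ≤ x := by
  rcases eq_or_ne x ⊤ with hx | hx
  · simp [hx, EReal.sub_top, le_top]
  have hx' : ((x : ℝ≥0∞) : EReal) = ((x.toReal : ℝ) : EReal) := by
    rw [← EReal.toReal_coe_ennreal]
    exact (EReal.coe_toReal (by simpa [EReal.coe_ennreal_eq_top_iff] using hx)
      (by simp)).symm
  rcases eq_or_ne y ⊤ with hy | hy
  · simp only [hy, EReal.coe_ennreal_top, EReal.sub_top, le_bot_iff, top_le_iff]
    rw [hx', ← EReal.coe_sub]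
    exact iff_of_false (EReal.coe_ne_bot _) hx
  have hy' : ((y : ℝ≥0∞) : EReal) = ((y.toReal : ℝ) : EReal) := by
    rw [← EReal.toReal_coe_ennreal]
    exact (EReal.coe_toReal (by simpa [EReal.coe_ennreal_eq_top_iff] using hy)
      (by simp)).symm
  rw [hx', hy', ← EReal.coe_sub, ← EReal.coe_sub, EReal.coe_le_coe_iff,
    sub_le_sub_iff_left, ← ENNReal.toReal_le_toReal hy hx]

lemma aux_mul {c x y : EReal} (hc : 0 < c) (hc' : c ≠ ⊤) : c * x ≤ c * y ↔ x ≤ y := by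
  have hbot : c ≠ ⊥ := ne_bot_of_gt hc
  constructor
  · intro h
    have h2 := EReal.div_le_div_right_of_nonneg hc.le h
    rwa [mul_comm c x, mul_comm c y, ← EReal.mul_div, ← EReal.mul_div,
      EReal.div_self hbot hc' hc.ne', mul_one, mul_one] at h2
  · intro h
    rw [mul_comm c x, mul_comm c y]
    exact mul_le_mul_of_nonneg_right h hc.le

theorem stmt_16 (PX PY B : ℝ) (hPX : 0 < PX) (hPY : 0 < PY) (hB : 0 < B)
    (ψ r : ℝ × ℝ → ℝ)
    (hψmeas : Measurable ψ) (hψnn : ∀ q, 0 ≤ ψ q)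
    (hrmeas : Measurable r) (hrnn : ∀ q, 0 ≤ r q)
    (hfin : (∫⁻ q in orth, ENNReal.ofReal (r q * ψ q)) < ⊤)
    (δ s N : ℝ) (hδ : 0 < δ) (hs : 0 < s) (hN : 0 < N) :
    ∀ L X0 Y0, Feasible PX PY B L X0 Y0 →
      ((∀ L' X0' Y0', Feasible PX PY B L' X0' Y0' →
          Rev r ψ δ s N L' ≤ Rev r ψ δ s N L) ↔
       (∀ L' X0' Y0', Feasible PX PY B L' X0' Y0' →
          Ineff (fun q => r q * ψ q) L ≤ Ineff (fun q => r q * ψ q) L')) := by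
  intro L X0 Y0 hL
  set A : ℝ≥0∞ := ∫⁻ q in orth, ENNReal.ofReal (r q * ψ q) with hA
  have hAtop : A ≠ ⊤ := hfin.ne
  have hAcast : ((A : ℝ≥0∞) : EReal) = ((A.toReal : ℝ) : EReal) := by
    rw [← EReal.toReal_coe_ennreal]
    exact (EReal.coe_toReal (by simpa [EReal.coe_ennreal_eq_top_iff] using hAtop)
      (by simp)).symm
  have hc : (0 : EReal) < ((ENNReal.ofReal (δ / N) : ℝ≥0∞) : EReal) := by
    rw [EReal.coe_ennreal_pos]
    exact ENNReal.ofReal_pos.2 (div_pos hδ hN)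
  have hc' : ((ENNReal.ofReal (δ / N) : ℝ≥0∞) : EReal) ≠ ⊤ := by
    simp [EReal.coe_ennreal_eq_top_iff]
  have key : ∀ L₁ L₂ : ℝ → ℝ, (Rev r ψ δ s N L₁ ≤ Rev r ψ δ s N L₂ ↔
      Ineff (fun q => r q * ψ q) L₂ ≤ Ineff (fun q => r q * ψ q) L₁) := by
    intro L₁ L₂
    rw [Rev, Rev, ← hA, aux_mul hc hc', hAcast, aux_sub]
    exact ENNReal.mul_le_mul_iff_right (by positivity) ENNReal.ofReal_ne_top
  exact ⟨fun h L' X0' Y0' h' => (key L' L).mp (h L' X0' Y0' h'),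
    fun h L' X0' Y0' h' => (key L' L).mpr (h L' X0' Y0' h')⟩
end
end

section
/- Let L : (0,∞) → [0,∞) and ψ : (0,∞)² → [0,∞) be measurable. Define the reserve functions 𝒳(q) = ∫_q^∞ L(p)/p² dp and 𝒴(q) = ∫₀^q L(p)/p dp for q > 0. Then, with all integrals taken as Lebesgue integrals with values in [0,∞]: ∬_{(0,∞)²} ψ(p_X, p_Y)·(p_X·𝒳(p_X/p_Y) + p_Y·𝒴(p_X/p_Y)) dp_X dp_Y = ∫₀^∞ [ (L(p)/p²)·∬_{(0,∞)²} p_X·ψ(p_X, p_Y)·𝟙{p_X/p_Y ≤ p} dp_X dp_Y + (L(p)/p)·∬_{(0,∞)²} p_Y·ψ(p_X, p_Y)·𝟙{p_X/p_Y ≥ p} dp_X dp_Y ] dp. In particular, the expected future value of the CFMM's reserves under the belief ψ is a linear function of the values L(p). -/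
/-!
Tonelli's theorem. Both sides are the integral over `(p_X, p_Y) ∈ orth` and `p > 0` of one
nonnegative density, which charges `L(p)/p²` weighted by `p_X ψ` where `p_X / p_Y ≤ p` and
`L(p)/p` weighted by `p_Y ψ` where `p ≤ p_X / p_Y`: integrating out `p` first gives the
reserves `𝒳` and `𝒴` (the endpoint `p = p_X / p_Y` is null), integrating out the prices
first gives the right-hand side.
-/

open MeasureTheory Set
open scoped ENNReal

noncomputable section

/-- Reserve of asset `X` at spot exchange rate `q`: `𝒳(q) = ∫_q^∞ L(p)/p² dp`. -/
def XRes (L : ℝ → ℝ) (q : ℝ) : ℝ≥0∞ :=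
  ∫⁻ p in Set.Ioi q, ENNReal.ofReal (L p / p ^ 2)

/-- Reserve of asset `Y` at spot exchange rate `q`: `𝒴(q) = ∫_0^q L(p)/p dp`. -/
def YRes (L : ℝ → ℝ) (q : ℝ) : ℝ≥0∞ :=
  ∫⁻ p in Set.Ioc 0 q, ENNReal.ofReal (L p / p)

lemma measurableSet_orth : MeasurableSet orth :=
  measurableSet_Ioi.prod measurableSet_Ioi

lemma setLIntegral_indicator_add_indicator {α : Type*} [MeasurableSpace α] {μ : Measure α}
    {s t u : Set α} (ht : MeasurableSet t) (hu : MeasurableSet u) {f g : α → ℝ≥0∞}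
    (hf : Measurable f) :
    ∫⁻ x in s, (t.indicator f x + u.indicator g x) ∂μ
      = ∫⁻ x in s ∩ t, f x ∂μ + ∫⁻ x in s ∩ u, g x ∂μ := by
  rw [lintegral_add_left (hf.indicator ht), lintegral_indicator ht, lintegral_indicator hu,
    Measure.restrict_restrict ht, Measure.restrict_restrict hu, inter_comm t, inter_comm u]

def reserveValueDensity (L : ℝ → ℝ) (ψ : ℝ × ℝ → ℝ) (q : ℝ × ℝ) (p : ℝ) : ℝ≥0∞ :=
  (if q.1 / q.2 ≤ p then ENNReal.ofReal (L p / p ^ 2) * ENNReal.ofReal (q.1 * ψ q) else 0)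
    + (if p ≤ q.1 / q.2 then ENNReal.ofReal (L p / p) * ENNReal.ofReal (q.2 * ψ q) else 0)

lemma measurable_uncurry_reserveValueDensity {L : ℝ → ℝ} {ψ : ℝ × ℝ → ℝ}
    (hL : Measurable L) (hψ : Measurable ψ) :
    Measurable (Function.uncurry (reserveValueDensity L ψ)) := by
  unfold reserveValueDensity Function.uncurry
  have hratio : Measurable fun x : (ℝ × ℝ) × ℝ => x.1.1 / x.1.2 := by fun_prop
  exact (Measurable.ite (measurableSet_le hratio measurable_snd) (by fun_prop)
    measurable_const).add
      (Measurable.ite (measurableSet_le measurable_snd hratio) (by fun_prop) measurable_const)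

lemma lintegral_Ioi_reserveValueDensity (L : ℝ → ℝ) (ψ : ℝ × ℝ → ℝ) {q : ℝ × ℝ}
    (hL : Measurable L) (hq : q ∈ orth) :
    ∫⁻ p in Ioi 0, reserveValueDensity L ψ q p
      = ENNReal.ofReal (ψ q) * (ENNReal.ofReal q.1 * XRes L (q.1 / q.2)
          + ENNReal.ofReal q.2 * YRes L (q.1 / q.2)) := by
  obtain ⟨x, y⟩ := q
  obtain ⟨hx, hy⟩ : 0 < x ∧ 0 < y := hq
  have hxy : 0 < x / y := div_pos hx hy
  have hdensity : reserveValueDensity L ψ (x, y) = fun p =>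
      (Ici (x / y)).indicator
        (fun p => ENNReal.ofReal (L p / p ^ 2) * ENNReal.ofReal (x * ψ (x, y))) p +
      (Iic (x / y)).indicator
        (fun p => ENNReal.ofReal (L p / p) * ENNReal.ofReal (y * ψ (x, y))) p := by
    ext p
    simp [reserveValueDensity, indicator_apply]
  have hXRes : ∫⁻ p in Ici (x / y), ENNReal.ofReal (L p / p ^ 2) = XRes L (x / y) :=
    setLIntegral_congr Ioi_ae_eq_Ici.symm
  rw [hdensity,
    setLIntegral_indicator_add_indicator measurableSet_Ici measurableSet_Iic (by fun_prop),
    inter_eq_right.mpr (Ici_subset_Ioi.mpr hxy), inter_comm, Iic_inter_Ioi,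
    lintegral_mul_const' _ _ ENNReal.ofReal_ne_top,
    lintegral_mul_const' _ _ ENNReal.ofReal_ne_top, hXRes,
    ENNReal.ofReal_mul hx.le, ENNReal.ofReal_mul hy.le, XRes, YRes]
  ring

lemma lintegral_orth_reserveValueDensity (L : ℝ → ℝ) {ψ : ℝ × ℝ → ℝ} (hψ : Measurable ψ)
    (p : ℝ) :
    ∫⁻ q in orth, reserveValueDensity L ψ q p
      = ENNReal.ofReal (L p / p ^ 2) *
            (∫⁻ q in {q : ℝ × ℝ | q ∈ orth ∧ q.1 / q.2 ≤ p}, ENNReal.ofReal (q.1 * ψ q)) +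
          ENNReal.ofReal (L p / p) *
            (∫⁻ q in {q : ℝ × ℝ | q ∈ orth ∧ p ≤ q.1 / q.2}, ENNReal.ofReal (q.2 * ψ q)) := by
  have hdensity : (fun q => reserveValueDensity L ψ q p) = fun q =>
      {q : ℝ × ℝ | q.1 / q.2 ≤ p}.indicator
        (fun q => ENNReal.ofReal (L p / p ^ 2) * ENNReal.ofReal (q.1 * ψ q)) q +
      {q : ℝ × ℝ | p ≤ q.1 / q.2}.indicator
        (fun q => ENNReal.ofReal (L p / p) * ENNReal.ofReal (q.2 * ψ q)) q := by
    ext q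
    simp [reserveValueDensity, indicator_apply]
  rw [hdensity,
    setLIntegral_indicator_add_indicator (measurableSet_le (by fun_prop) (by fun_prop))
      (measurableSet_le (by fun_prop) (by fun_prop)) (by fun_prop),
    lintegral_const_mul' _ _ ENNReal.ofReal_ne_top,
    lintegral_const_mul' _ _ ENNReal.ofReal_ne_top]
  rfl

theorem stmt_17_general (L : ℝ → ℝ) (ψ : ℝ × ℝ → ℝ)
    (hLmeas : Measurable L) (hψmeas : Measurable ψ) :
    (∫⁻ q in orth,
        ENNReal.ofReal (ψ q) *
          (ENNReal.ofReal q.1 * XRes L (q.1 / q.2) +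
           ENNReal.ofReal q.2 * YRes L (q.1 / q.2)))
      = ∫⁻ p in Set.Ioi (0:ℝ),
          (ENNReal.ofReal (L p / p ^ 2) *
              (∫⁻ q in {q : ℝ × ℝ | q ∈ orth ∧ q.1 / q.2 ≤ p},
                ENNReal.ofReal (q.1 * ψ q)) +
           ENNReal.ofReal (L p / p) *
              (∫⁻ q in {q : ℝ × ℝ | q ∈ orth ∧ p ≤ q.1 / q.2},
                ENNReal.ofReal (q.2 * ψ q))) := by
  calc _ = ∫⁻ q in orth, ∫⁻ p in Ioi 0, reserveValueDensity L ψ q p :=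
        setLIntegral_congr_fun measurableSet_orth fun q hq =>
          (lintegral_Ioi_reserveValueDensity L ψ hLmeas hq).symm
    _ = ∫⁻ p in Ioi 0, ∫⁻ q in orth, reserveValueDensity L ψ q p :=
        lintegral_lintegral_swap
          (measurable_uncurry_reserveValueDensity hLmeas hψmeas).aemeasurable
    _ = _ := by simp only [lintegral_orth_reserveValueDensity L hψmeas]

theorem stmt_17 (L : ℝ → ℝ) (ψ : ℝ × ℝ → ℝ)
    (hLmeas : Measurable L) (hLnn : ∀ p ∈ Set.Ioi (0:ℝ), 0 ≤ L p)
    (hψmeas : Measurable ψ) (hψnn : ∀ q, 0 ≤ ψ q) :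
    (∫⁻ q in orth,
        ENNReal.ofReal (ψ q) *
          (ENNReal.ofReal q.1 * XRes L (q.1 / q.2) +
           ENNReal.ofReal q.2 * YRes L (q.1 / q.2)))
      = ∫⁻ p in Set.Ioi (0:ℝ),
          (ENNReal.ofReal (L p / p ^ 2) *
              (∫⁻ q in {q : ℝ × ℝ | q ∈ orth ∧ q.1 / q.2 ≤ p},
                ENNReal.ofReal (q.1 * ψ q)) +
           ENNReal.ofReal (L p / p) *
              (∫⁻ q in {q : ℝ × ℝ | q ∈ orth ∧ p ≤ q.1 / q.2},
                ENNReal.ofReal (q.2 * ψ q))) :=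
  stmt_17_general L ψ hLmeas hψmeas
end
end
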